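/- arXiv:1203.4965 — 3 statements merged into one kernel-verified Lean document; each statement's English description precedes it below -/
import Mathlib

section
/- Associativity of colored gluing: let (V, W, σ), (V₁, W₁, σ₁), (V₂, W₂, σ₂) be closed D-colored graphs, v : V a white vertex, w̄₁ : W₁ a black vertex, v' : V₁ a white vertex and w̄₂ : W₂ a black vertex. Then σ ⋆_{(v,w̄₁)} (σ₁ ⋆_{(v',w̄₂)} σ₂) is isomorphic to (σ ⋆_{(v,w̄₁)} σ₁) ⋆_{(v',w̄₂)} σ₂, where the vertices v', w̄₁, w̄₂ are viewed as the corresponding vertices of the intermediate glued graphs. -/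
open scoped BigOperators

variable {D N : ℕ}

-- The colored gluing `σ ⋆_{(v₁,w₂)} τ` of two closed `D`-colored graphs at the white
-- vertex `v₁` of the first and the black vertex `w₂` of the second: the two vertices are
-- deleted and the lines touching them are joined pairwise respecting the colors.
open Classical in
noncomputable def glue {V₁ W₁ V₂ W₂ : Type*}
    (σ : Fin D → V₁ ≃ W₁) (τ : Fin D → V₂ ≃ W₂) (v₁ : V₁) (w₂ : W₂) (i : Fin D) :
    ({v : V₁ // v ≠ v₁} ⊕ V₂) ≃ (W₁ ⊕ {w : W₂ // w ≠ w₂}) where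
  toFun :=
    Sum.elim (fun v => Sum.inl (σ i v.1))
      (fun v => if h : τ i v = w₂ then Sum.inl (σ i v₁) else Sum.inr ⟨τ i v, h⟩)
  invFun :=
    Sum.elim
      (fun w => if h : (σ i).symm w = v₁ then Sum.inr ((τ i).symm w₂)
        else Sum.inl ⟨(σ i).symm w, h⟩)
      (fun w => Sum.inr ((τ i).symm w.1))
  left_inv := by
    rintro (⟨v, hv⟩ | v)
    · simp only [Sum.elim_inl]
      rw [dif_neg (by simpa using hv)]
      simp
    · simp only [Sum.elim_inr]
      split_ifs with h
      · simp only [Sum.elim_inl]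
        rw [dif_pos (by simp)]
        simp [← h]
      · simp
  right_inv := by
    rintro (w | ⟨w, hw⟩)
    · simp only [Sum.elim_inl]
      split_ifs with h
      · simp only [Sum.elim_inr]
        rw [dif_pos (by simp), ← h]
        simp
      · simp
    · simp only [Sum.elim_inr, Equiv.apply_symm_apply]
      rw [dif_neg (by simpa using hw)]

/-- Isomorphism of closed `D`-colored graphs: a pair of bijections of the white and of the
black vertices commuting with all the colored bijections. -/
def GraphIso {V W V' W' : Type*} (σ : Fin D → V ≃ W) (σ' : Fin D → V' ≃ W') : Prop :=
  ∃ (f : V ≃ V') (g : W ≃ W'), ∀ i v, σ' i (f v) = g (σ i v)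

/-!
Both glued graphs have, up to reassociating sums, the white vertices `(V ∖ v) ⊕ (V₁ ∖ v') ⊕ V₂`
and the black vertices `W ⊕ (W₁ ∖ w̄₁) ⊕ (W₂ ∖ w̄₂)`. In either order of gluing, a line of color
`i` keeps its endpoint unless it hits `w̄₂`, in which case it is rerouted to `σ₁ i v'`, and if
that is `w̄₁`, rerouted once more to `σ i v`. So the reassociation maps form the isomorphism.
-/

namespace Equiv

variable {α β : Type*}

def sumSubtypeNeInl (a : α) : {p : α ⊕ β // p ≠ .inl a} ≃ {x // x ≠ a} ⊕ β :=
  subtypeSum.trans <| sumCongr (subtypeEquivRight fun _ => Sum.inl_injective.ne_iff)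
    (subtypeUnivEquiv fun _ => Sum.inr_ne_inl)

def sumSubtypeNeInr (b : β) : {p : α ⊕ β // p ≠ .inr b} ≃ α ⊕ {y // y ≠ b} :=
  subtypeSum.trans <| sumCongr (subtypeUnivEquiv fun _ => Sum.inl_ne_inr)
    (subtypeEquivRight fun _ => Sum.inr_injective.ne_iff)

@[simp]
theorem sumSubtypeNeInl_inl (a x : α) (h : Sum.inl x ≠ (Sum.inl a : α ⊕ β)) :
    sumSubtypeNeInl a ⟨.inl x, h⟩ = .inl ⟨x, Sum.inl_injective.ne_iff.1 h⟩ := rfl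

@[simp]
theorem sumSubtypeNeInl_inr (a : α) (y : β) (h : Sum.inr y ≠ Sum.inl a) :
    sumSubtypeNeInl a ⟨.inr y, h⟩ = .inr y := rfl

@[simp]
theorem sumSubtypeNeInr_symm_inl (b : β) (x : α) :
    (sumSubtypeNeInr b).symm (.inl x) = ⟨.inl x, Sum.inl_ne_inr⟩ := rfl

@[simp]
theorem sumSubtypeNeInr_symm_inr (b : β) (y : {y // y ≠ b}) :
    (sumSubtypeNeInr (α := α) b).symm (.inr y) = ⟨.inr y, Sum.inr_injective.ne y.2⟩ := rfl

end Equiv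

section Glue

variable {V₁ W₁ V₂ W₂ : Type*} (σ : Fin D → V₁ ≃ W₁) (τ : Fin D → V₂ ≃ W₂) (v₁ : V₁)
  {w₂ : W₂} (i : Fin D)

@[simp]
theorem glue_inl (v : {v // v ≠ v₁}) : glue σ τ v₁ w₂ i (.inl v) = .inl (σ i v) := rfl

theorem glue_inr_of_eq {v : V₂} (h : τ i v = w₂) :
    glue σ τ v₁ w₂ i (.inr v) = .inl (σ i v₁) := by
  simp [glue, h]

theorem glue_inr_of_ne {v : V₂} (h : τ i v ≠ w₂) :
    glue σ τ v₁ w₂ i (.inr v) = .inr ⟨τ i v, h⟩ := by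
  simp [glue, h]

end Glue

/-- **Statement 6.** Associativity of the colored gluing:
`σ ⋆_{(v,w̄₁)} (σ₁ ⋆_{(v',w̄₂)} σ₂) ≅ (σ ⋆_{(v,w̄₁)} σ₁) ⋆_{(v',w̄₂)} σ₂`. -/
theorem glue_assoc {D : ℕ} {V W V₁ W₁ V₂ W₂ : Type*}
    (σ : Fin D → V ≃ W) (σ₁ : Fin D → V₁ ≃ W₁) (σ₂ : Fin D → V₂ ≃ W₂)
    (v : V) (wb₁ : W₁) (v' : V₁) (wb₂ : W₂) :
    GraphIso (glue σ (glue σ₁ σ₂ v' wb₂) v (Sum.inl wb₁))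
      (glue (glue σ σ₁ v wb₁) σ₂ (Sum.inr v') wb₂) := by
  refine ⟨(Equiv.sumAssoc _ _ _).symm.trans
      (Equiv.sumCongr (Equiv.sumSubtypeNeInr v').symm (Equiv.refl _)),
    (Equiv.sumCongr (Equiv.refl _) (Equiv.sumSubtypeNeInl wb₁)).trans
      (Equiv.sumAssoc _ _ _).symm, ?_⟩
  rintro i (x | y | z)
  · simp
  · by_cases hy : σ₁ i y = wb₁
    · simp [glue_inr_of_eq, hy]
    · -- `simp` cannot rewrite the inner gluing under the subtype constructor, so feed it its value.
      have hy' : glue σ₁ σ₂ v' wb₂ i (.inl y) ≠ .inl wb₁ := by simpa using hy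
      simp [glue_inr_of_ne _ _ _ _ hy', glue_inr_of_ne, hy]
  · by_cases hz : σ₂ i z = wb₂
    · by_cases hv' : σ₁ i v' = wb₁ <;> simp [glue_inr_of_eq, glue_inr_of_ne, hz, hv']
    · simp [glue_inr_of_ne, hz]
end

section
/- Feynman amplitude evaluation: let V and W be finite types, σ : Fin D → (V ≃ W) a closed D-colored graph, σ₀ : V ≃ W an additional bijection of color 0 (the propagator pairing), and N ≥ 1. Then Σ_{a : V → Fin D → Fin N} Σ_{b : W → Fin D → Fin N} Π_{i : Fin D} Π_{v : V} (if a v i = b (σ i v) i then 1 else 0) · (if a v i = b (σ₀ v) i then 1 else 0) = N^{Σ_{i : Fin D} F^{0i}}, where F^{0i} is the number of orbits on W of the permutation σ₀.symm.trans (σ i) (the number of faces of colors 0 and i). -/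
open scoped BigOperators

variable {D N : ℕ}

/-- The orbit ("same cycle") setoid of a permutation. -/
def sameCycleSetoid {α : Type*} (e : Equiv.Perm α) : Setoid α :=
  ⟨e.SameCycle, ⟨fun x => Equiv.Perm.SameCycle.refl e x, fun h => h.symm, fun h h' => h.trans h'⟩⟩

/-- The number of orbits of a permutation. -/
noncomputable def permOrbitCount {α : Type*} (e : Equiv.Perm α) : ℕ :=
  Nat.card (Quotient (sameCycleSetoid e))

/-!
Each color `i` contributes independently: the factor of color `i` forces `a v i = b (σ i v) i`
and `a v i = b (σ₀ v) i`, so `a · i` is determined by `b · i`, and the latter must be invariant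
under `σ₀⁻¹ σ i`, i.e. constant on its orbits, which are the `(0,i)`-faces. The `N`-valued
functions constant on the faces are counted by `N ^ F^{0i}`, and the amplitude is the product of
these counts over the colors.
-/

namespace Equiv.Perm

variable {α β : Type*}

theorem SameCycle.apply_eq_of_invariant {e : Perm α} {f : α → β} (hf : ∀ x, f (e x) = f x)
    {x y : α} (h : e.SameCycle x y) : f x = f y := by
  obtain ⟨n, rfl⟩ := h
  induction n using Int.induction_on generalizing x with
  | zero => rfl
  | succ k ih => rw [zpow_add_one, mul_apply, ← ih, hf]
  | pred k ih => rw [zpow_sub_one, mul_apply, ← ih, ← hf (e⁻¹ x), coe_inv, apply_symm_apply]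

def invariantFunEquiv (e : Perm α) :
    {f : α → β // ∀ x, f (e x) = f x} ≃ (Quotient (sameCycleSetoid e) → β) where
  toFun f := Quotient.lift f.1 fun _ _ => SameCycle.apply_eq_of_invariant f.2
  invFun g := ⟨fun x => g ⟦x⟧, fun x =>
    congrArg g (Quotient.sound (sameCycle_apply_left.2 (.refl e x)))⟩
  left_inv _ := rfl
  right_inv _ := funext fun q => Quotient.inductionOn q fun _ => rfl

theorem card_invariantFun [Finite α] (e : Perm α) :
    Nat.card {f : α → β // ∀ x, f (e x) = f x} = Nat.card β ^ permOrbitCount e := by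
  rw [Nat.card_congr (invariantFunEquiv e), Nat.card_fun, permOrbitCount]

end Equiv.Perm

section SingleColor

variable {V W β : Type*}

def faceConstraintEquiv (τ σ₀ : V ≃ W) :
    {p : (V → β) × (W → β) // ∀ v, p.1 v = p.2 (τ v) ∧ p.1 v = p.2 (σ₀ v)} ≃
      {f : W → β // ∀ w, f ((σ₀.symm.trans τ) w) = f w} where
  toFun p := ⟨p.1.2, fun w => by
    obtain ⟨hτ, hσ₀⟩ := p.2 (σ₀.symm w)
    rw [Equiv.apply_symm_apply] at hσ₀
    exact hτ.symm.trans hσ₀⟩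
  invFun f := ⟨(f.1 ∘ σ₀, f.1), fun v => ⟨by simpa using (f.2 (σ₀ v)).symm, rfl⟩⟩
  left_inv p := Subtype.ext <| Prod.ext (funext fun v => (p.2 v).2.symm) rfl
  right_inv _ := rfl

theorem sum_sum_prod_delta_eq_pow [Fintype V] [DecidableEq V] [Fintype W] [DecidableEq W]
    [Fintype β] [DecidableEq β] {R : Type*} [CommSemiring R] (τ σ₀ : V ≃ W) :
    ∑ x : V → β, ∑ y : W → β,
        ∏ v, ((if x v = y (τ v) then (1 : R) else 0) * (if x v = y (σ₀ v) then (1 : R) else 0))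
      = (Fintype.card β : R) ^ permOrbitCount (σ₀.symm.trans τ) := by
  simp only [ite_zero_mul_ite_zero, mul_one, Fintype.prod_boole]
  rw [← Fintype.sum_prod_type', Finset.sum_boole, ← Fintype.card_subtype,
    ← Nat.card_eq_fintype_card, Nat.card_congr (faceConstraintEquiv τ σ₀),
    Equiv.Perm.card_invariantFun, Nat.card_eq_fintype_card, Nat.cast_pow]

end SingleColor

theorem sum_sum_prod_eq_prod_sum_sum {ι κ μ R : Type*} [Fintype ι] [DecidableEq ι] [Fintype κ]
    [Fintype μ] [CommSemiring R] (f : ι → κ → μ → R) :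
    ∑ x : ι → κ, ∑ y : ι → μ, ∏ i, f i (x i) (y i) = ∏ i, ∑ a, ∑ b, f i a b := by
  simp_rw [Fintype.prod_sum]

open Classical in
theorem amplitude_eval_general {D N : ℕ} {V W : Type*}
    [Fintype V] [Fintype W] (σ : Fin D → V ≃ W) (σ₀ : V ≃ W) :
    ∑ a : V → Fin D → Fin N, ∑ b : W → Fin D → Fin N,
        ∏ i : Fin D, ∏ v : V,
          ((if a v i = b (σ i v) i then (1 : ℂ) else 0) *
            (if a v i = b (σ₀ v) i then (1 : ℂ) else 0))
      = (N : ℂ) ^ (∑ i : Fin D, permOrbitCount (σ₀.symm.trans (σ i))) := by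
  have colorwise := sum_sum_prod_eq_prod_sum_sum fun i (x : V → Fin N) (y : W → Fin N) =>
    ∏ v, ((if x v = y (σ i v) then (1 : ℂ) else 0) * (if x v = y (σ₀ v) then (1 : ℂ) else 0))
  rw [← (Equiv.piComm fun (_ : Fin D) (_ : V) => Fin N).sum_comp]
  simp_rw [← (Equiv.piComm fun (_ : Fin D) (_ : W) => Fin N).sum_comp]
  simp only [Equiv.piComm_apply, Function.swap]
  rw [colorwise]
  simp only [sum_sum_prod_delta_eq_pow, Fintype.card_fin, Finset.prod_pow_eq_pow_sum]

open Classical in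
theorem amplitude_eval {D N : ℕ} (hD : 1 ≤ D) (hN : 1 ≤ N) {V W : Type*}
    [Fintype V] [Fintype W] (σ : Fin D → V ≃ W) (σ₀ : V ≃ W) :
    ∑ a : V → Fin D → Fin N, ∑ b : W → Fin D → Fin N,
        ∏ i : Fin D, ∏ v : V,
          ((if a v i = b (σ i v) i then (1 : ℂ) else 0) *
            (if a v i = b (σ₀ v) i then (1 : ℂ) else 0))
      = (N : ℂ) ^ (∑ i : Fin D, permOrbitCount (σ₀.symm.trans (σ i))) :=
  amplitude_eval_general σ σ₀
end

section
/- Cutting identity (algebraic core of the Schwinger–Dyson equations): let (V, W, σ) be a closed D-colored graph and w̄₁ : W a black vertex. Then in the polynomial ring R, Σ_{p : Fin D → Fin N} pderiv (Sum.inl p) (tr_{σ,w̄₁}(p)) = Σ_{v : V} N^{d(v,w̄₁)} · tr_{σ/(v,w̄₁)}, where d(v,w̄₁) = card {i : Fin D | σ i v = w̄₁}, and the trace-invariant polynomial of a graph with empty vertex set is 1 by convention. -/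
open scoped BigOperators

variable {D N : ℕ}

-- The colored contraction `σ/(v₁,w₁)` of a closed `D`-colored graph with respect to the
-- white vertex `v₁` and the black vertex `w₁`: the two vertices are deleted and the lines
-- touching them are reconnected pairwise respecting the colors.
open Classical in
noncomputable def contract {V W : Type*} (σ : Fin D → V ≃ W) (v₁ : V) (w₁ : W) (i : Fin D) :
    {v : V // v ≠ v₁} ≃ {w : W // w ≠ w₁} where
  toFun v :=
    if h : σ i v.1 = w₁ then ⟨σ i v₁, fun hc => v.2 ((σ i).injective (h.trans hc.symm))⟩
    else ⟨σ i v.1, h⟩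
  invFun w :=
    if h : (σ i).symm w.1 = v₁ then
      ⟨(σ i).symm w₁, fun hc => w.2 ((σ i).symm.injective (h.trans hc.symm))⟩
    else ⟨(σ i).symm w.1, h⟩
  left_inv := by
    rintro ⟨x, hx⟩
    dsimp only
    by_cases h : σ i x = w₁
    · rw [dif_pos h, dif_pos (by simp)]
      exact Subtype.ext (by simp [← h])
    · rw [dif_neg h, dif_neg (by simpa using hx)]
      simp
  right_inv := by
    rintro ⟨y, hy⟩
    dsimp only
    by_cases h : (σ i).symm y = v₁
    · rw [dif_pos h, dif_pos (by simp)]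
      exact Subtype.ext (by simp [← h])
    · rw [dif_neg h, dif_neg (by simpa using hy)]
      simp

/-- The polynomial ring in the tensor entries `T_n` (variables `Sum.inl n`) and their
complex conjugates `T̄_n` (variables `Sum.inr n`). -/
abbrev TensorRing (D N : ℕ) : Type :=
  MvPolynomial ((Fin D → Fin N) ⊕ (Fin D → Fin N)) ℂ

-- The trace invariant of a closed `D`-colored graph, as a polynomial in the tensor entries.
open Classical in
noncomputable def tracePoly {V W : Type*} [Finite V] [Finite W]
    (σ : Fin D → V ≃ W) : TensorRing D N :=
  letI := Fintype.ofFinite V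
  letI := Fintype.ofFinite W
  ∑ a : V → Fin D → Fin N,
    (∏ v, MvPolynomial.X (Sum.inl (a v))) *
      ∏ w, MvPolynomial.X (Sum.inr fun i => a ((σ i).symm w) i)

-- The trace invariant polynomial opened at the black vertex `w₁`: the factor
-- `X (Sum.inr (fun i => a ((σ i).symm w₁) i))` is replaced by the Kronecker delta.
open Classical in
noncomputable def tracePolyBlack {V W : Type*} [Finite V] [Finite W]
    (σ : Fin D → V ≃ W) (w₁ : W) (p : Fin D → Fin N) : TensorRing D N :=
  letI := Fintype.ofFinite V
  letI := Fintype.ofFinite W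
  ∑ a : V → Fin D → Fin N,
    (∏ v, MvPolynomial.X (Sum.inl (a v))) *
      ∏ w, if w = w₁ then ∏ i, (if a ((σ i).symm w) i = p i then (1 : TensorRing D N) else 0)
        else MvPolynomial.X (Sum.inr fun i => a ((σ i).symm w) i)

/-!
Expanding `tr_{σ,w̄₁}(p)` over the white labelings `a`, the delta at `w̄₁` pins the index
`p` to the index `b(a)` that the white neighbors of `w̄₁` assign to it, so the sum over `p`
collapses and `∂/∂T_{b(a)}` strikes, one at a time, each white vertex `v` with `a v = b(a)`.
For fixed `v`, a labeling with `a v = b(a)` is the same as a labeling of the contracted graph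
`σ/(v,w̄₁)` (reconnecting the lines through `v` and `w̄₁` preserves every index) together with
the free indices on the `d(v,w̄₁)` lines joining `v` to `w̄₁`; these give the factor `N^d`.
-/

theorem Derivation.leibniz_finsetProd {R A M : Type*} [CommSemiring R] [CommSemiring A]
    [Algebra R A] [AddCommMonoid M] [Module A M] [Module R M] (δ : Derivation R A M)
    {ι : Type*} [DecidableEq ι] (s : Finset ι) (f : ι → A) :
    δ (∏ i ∈ s, f i) = ∑ i ∈ s, (∏ j ∈ s.erase i, f j) • δ (f i) := by
  induction s using Finset.induction_on with
  | empty => simp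
  | insert a s ha ih =>
    rw [Finset.prod_insert ha, δ.leibniz, ih, Finset.sum_insert ha, Finset.erase_insert ha,
      Finset.smul_sum, add_comm]
    congr 1
    refine Finset.sum_congr rfl fun i hi => ?_
    rw [Finset.erase_insert_of_ne (ne_of_mem_of_not_mem hi ha).symm,
      Finset.prod_insert (fun h => ha (Finset.mem_of_mem_erase h)), mul_smul]

theorem Equiv.symm_apply_ne_iff {α β : Type*} (e : α ≃ β) {x : α} {y : β} :
    e.symm y ≠ x ↔ e x ≠ y := by
  rw [ne_eq, Equiv.symm_apply_eq, eq_comm]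

namespace MvPolynomial

theorem pderiv_prod_X {σ R ι : Type*} [CommSemiring R] [DecidableEq σ] [DecidableEq ι]
    (x : σ) (s : Finset ι) (a : ι → σ) :
    pderiv x (∏ i ∈ s, X (a i) : MvPolynomial σ R) =
      ∑ i ∈ s with a i = x, ∏ j ∈ s.erase i, X (a j) := by
  rw [Derivation.leibniz_finsetProd, Finset.sum_filter]
  refine Finset.sum_congr rfl fun i _ => ?_
  rw [pderiv_X, Pi.single_apply]
  split_ifs <;> simp

theorem pderiv_inl_prod_X_inl_mul_prod_X_inr {R ι κ V W : Type*} [CommSemiring R]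
    [DecidableEq ι] [Fintype V] [DecidableEq V]
    (x : ι) (a : V → ι) (t : Finset W) (b : W → κ) :
    pderiv (Sum.inl x) ((∏ v, X (Sum.inl (a v))) * ∏ w ∈ t, X (Sum.inr (b w)) :
        MvPolynomial (ι ⊕ κ) R) =
      ∑ v with a v = x,
        (∏ u ∈ Finset.univ.erase v, X (Sum.inl (a u))) * ∏ w ∈ t, X (Sum.inr (b w)) := by
  classical
  have hinr : pderiv (Sum.inl x) (∏ w ∈ t, X (Sum.inr (b w)) : MvPolynomial (ι ⊕ κ) R) = 0 := by
    rw [pderiv_prod_X, Finset.filter_false_of_mem fun _ _ => Sum.inr_ne_inl, Finset.sum_empty]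
  rw [Derivation.leibniz, hinr, smul_zero, zero_add, pderiv_prod_X, smul_eq_mul, mul_comm,
    Finset.sum_mul]
  simp only [Sum.inl.injEq]

end MvPolynomial

open MvPolynomial

section ColoredGraph

variable {V W : Type*}

def blackIndex (σ : Fin D → V ≃ W) (a : V → Fin D → Fin N) (w : W) : Fin D → Fin N :=
  fun i => a ((σ i).symm w) i

noncomputable def coloringMonomial [Fintype V] [Fintype W] (σ : Fin D → V ≃ W)
    (a : V → Fin D → Fin N) : TensorRing D N :=
  (∏ v, X (Sum.inl (a v))) * ∏ w, X (Sum.inr (blackIndex σ a w))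

theorem tracePoly_eq_sum [Fintype V] [Fintype W] [DecidableEq V] (σ : Fin D → V ≃ W) :
    tracePoly (N := N) σ = ∑ a, coloringMonomial σ a := by
  unfold tracePoly coloringMonomial blackIndex
  congr!

theorem tracePolyBlack_eq_sum_ite [Fintype V] [Fintype W] [DecidableEq V] [DecidableEq W]
    (σ : Fin D → V ≃ W) (w₁ : W) (p : Fin D → Fin N) :
    tracePolyBlack σ w₁ p =
      ∑ a : V → Fin D → Fin N, if blackIndex σ a w₁ = p then
        (∏ v, X (Sum.inl (a v))) * ∏ w ∈ Finset.univ.erase w₁, X (Sum.inr (blackIndex σ a w))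
      else 0 := by
  have hunfold : tracePolyBlack σ w₁ p = ∑ a : V → Fin D → Fin N, (∏ v, X (Sum.inl (a v))) *
      ∏ w, if w = w₁ then ∏ i, (if blackIndex σ a w i = p i then (1 : TensorRing D N) else 0)
        else X (Sum.inr (blackIndex σ a w)) := by
    unfold tracePolyBlack blackIndex
    congr!
  rw [hunfold]
  refine Finset.sum_congr rfl fun a _ => ?_
  rw [← Finset.mul_prod_erase _ _ (Finset.mem_univ w₁), if_pos rfl, Fintype.prod_boole,
    Finset.prod_congr rfl fun w hw => if_neg (Finset.ne_of_mem_erase hw)]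
  simp only [← funext_iff]
  split_ifs <;> simp

theorem blackIndex_contract {σ : Fin D → V ≃ W} {v₁ : V} {w₁ : W} {a : V → Fin D → Fin N}
    (ha : a v₁ = blackIndex σ a w₁) (w : {w : W // w ≠ w₁}) :
    blackIndex (contract σ v₁ w₁) (fun v => a v) w = blackIndex σ a w := by
  funext i
  by_cases h : (σ i).symm w = v₁
  · simpa [blackIndex, contract, h] using (congrFun ha i).symm
  · simp [blackIndex, contract, h]

/-- On a color `i` with `σ i v₁ ≠ w₁`, the pinning `a v₁ = blackIndex σ a w₁` forces `a v₁ i`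
to be the index of the white vertex `(σ i).symm w₁ ≠ v₁`; only the colors of the lines
joining `v₁` to `w₁` stay free. -/
def pinnedColoringEquiv [DecidableEq V] [DecidableEq W] (σ : Fin D → V ≃ W) (v₁ : V) (w₁ : W) :
    {a : V → Fin D → Fin N // a v₁ = blackIndex σ a w₁} ≃
      ({v : V // v ≠ v₁} → Fin D → Fin N) × ({i : Fin D // σ i v₁ = w₁} → Fin N) where
  toFun a := (fun v => a.1 v, fun i => a.1 v₁ i)
  invFun bc := ⟨fun v => if h : v = v₁ then fun i =>
        if h' : σ i v₁ = w₁ then bc.2 ⟨i, h'⟩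
        else bc.1 ⟨(σ i).symm w₁, (σ i).symm_apply_ne_iff.2 h'⟩ i
      else bc.1 ⟨v, h⟩, by
    funext i
    by_cases h' : σ i v₁ = w₁
    · simp [blackIndex, h', ← Equiv.eq_symm_apply]
    · simp [blackIndex, h', (σ i).symm_apply_ne_iff.2 h']⟩
  left_inv := by
    rintro ⟨a, ha⟩
    refine Subtype.ext (funext fun v => funext fun i => ?_)
    by_cases hv : v = v₁
    · subst hv
      by_cases h' : σ i v = w₁
      · simp [h']
      · simpa [h', blackIndex] using (congrFun ha i).symm
    · simp [hv]
  right_inv := by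
    rintro ⟨b, c⟩
    refine Prod.ext (funext fun v => ?_) (funext fun i => ?_)
    · simp [v.2]
    · simp [i.2]

theorem sum_pinned_eq_pow_mul_tracePoly_contract [Fintype V] [Fintype W] [DecidableEq V]
    [DecidableEq W] (σ : Fin D → V ≃ W) (v₁ : V) (w₁ : W) :
    ∑ a : V → Fin D → Fin N with a v₁ = blackIndex σ a w₁,
        ((∏ v ∈ Finset.univ.erase v₁, X (Sum.inl (a v))) *
          ∏ w ∈ Finset.univ.erase w₁, X (Sum.inr (blackIndex σ a w)) : TensorRing D N) =
      (N : TensorRing D N) ^ Nat.card {i // σ i v₁ = w₁} * tracePoly (contract σ v₁ w₁) := by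
  have hrestrict : ∀ a : {a : V → Fin D → Fin N // a v₁ = blackIndex σ a w₁},
      ((∏ v ∈ Finset.univ.erase v₁, X (Sum.inl (a.1 v))) *
          ∏ w ∈ Finset.univ.erase w₁, X (Sum.inr (blackIndex σ a.1 w)) : TensorRing D N) =
        coloringMonomial (contract σ v₁ w₁) (pinnedColoringEquiv σ v₁ w₁ a).1 := by
    intro a
    simp only [coloringMonomial, pinnedColoringEquiv, Equiv.coe_fn_mk, blackIndex_contract a.2]
    exact congrArg₂ (· * ·) (Finset.prod_subtype _ (fun v => by simp) _)
      (Finset.prod_subtype _ (fun w => by simp) _)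
  rw [Finset.sum_subtype (p := fun a => a v₁ = blackIndex σ a w₁) _ (fun a => by simp),
    Fintype.sum_equiv (pinnedColoringEquiv σ v₁ w₁) _ (fun bc => coloringMonomial _ bc.1) hrestrict,
    Fintype.sum_prod_type_right]
  simp only [Finset.sum_const, Finset.card_univ, nsmul_eq_mul, Fintype.card_fun,
    Fintype.card_fin, Nat.card_eq_fintype_card, Nat.cast_pow, tracePoly_eq_sum]

end ColoredGraph

theorem cutting_identity_general {D N : ℕ} {V W : Type*}
    [Fintype V] [Fintype W] (σ : Fin D → V ≃ W) (wb : W) :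
    ∑ p : Fin D → Fin N, MvPolynomial.pderiv (Sum.inl p) (tracePolyBlack σ wb p)
      = ∑ v : V, (N : TensorRing D N) ^ (Nat.card {i : Fin D // σ i v = wb}) *
          tracePoly (contract σ v wb) := by
  classical
  calc ∑ p : Fin D → Fin N, pderiv (Sum.inl p) (tracePolyBlack σ wb p)
      = ∑ a : V → Fin D → Fin N, pderiv (Sum.inl (blackIndex σ a wb))
          ((∏ v, X (Sum.inl (a v))) *
            ∏ w ∈ Finset.univ.erase wb, X (Sum.inr (blackIndex σ a w))) := by
        simp only [tracePolyBlack_eq_sum_ite, map_sum, apply_ite, map_zero]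
        rw [Finset.sum_comm]
        simp only [Finset.sum_ite_eq, Finset.mem_univ, if_true]
    _ = ∑ v, ∑ a : V → Fin D → Fin N with a v = blackIndex σ a wb,
          (∏ u ∈ Finset.univ.erase v, X (Sum.inl (a u))) *
            ∏ w ∈ Finset.univ.erase wb, X (Sum.inr (blackIndex σ a w)) := by
        simp only [pderiv_inl_prod_X_inl_mul_prod_X_inr, Finset.sum_filter]
        exact Finset.sum_comm
    _ = _ := Finset.sum_congr rfl fun v _ => sum_pinned_eq_pow_mul_tracePoly_contract σ v wb

/-- **Statement 16.** The cutting identity, algebraic core of the Schwinger–Dyson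
equations: `Σ_p ∂_{T_p} tr_{σ,w̄₁}(p) = Σ_v N^{d(v,w̄₁)} tr_{σ/(v,w̄₁)}`. -/
theorem cutting_identity {D N : ℕ} (hD : 1 ≤ D) (hN : 1 ≤ N) {V W : Type*}
    [Fintype V] [Fintype W] (σ : Fin D → V ≃ W) (wb : W) :
    ∑ p : Fin D → Fin N, MvPolynomial.pderiv (Sum.inl p) (tracePolyBlack σ wb p)
      = ∑ v : V, (N : TensorRing D N) ^ (Nat.card {i : Fin D // σ i v = wb}) *
          tracePoly (contract σ v wb) :=
  cutting_identity_general σ wb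
end
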